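/- For the Gaussian-kernel approximation problem under the normalized error criterion, the problem is quasi-polynomially tractable for every nonincreasing sequence (γ_k²) of positive shape parameters, and the exponent of QPT is t* = 2 / lim_{k→∞} ln((1+2γ_k²+√(1+4γ_k²))/(2γ_k²)) (the limit exists in (0,∞] by monotonicity, and t* := 0 when the limit is ∞). -/

import Mathlib

/-!
Write `ω_k = exp(-L_k)`; then `L_k = ln((1 + 2γ_k² + √(1 + 4γ_k²)) / (2γ_k²))` increases to some
`L* ∈ (0, ∞]`, and the claim is `t* = 2 / L*`.

Upper bound: Markov's inequality with exponent `τ` gives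
`n(ε, d) ≤ ε^{-2τ} ∏_{k ≤ d} (1 - ω_k^τ)⁻¹`. For `τ = t (1 + ln d) / 2` and `t L_K ≥ 2` the terms
`ω_k^τ ≤ 1 / d` with `k ≥ K` sum to at most `1`, so the product is bounded independently of `d`
and every `t > 2 / L*` is a QPT exponent.

Lower bound: if `L_k ≤ M` for all `k`, choosing one coordinate in each of `s` blocks of `m`
coordinates gives `m^s` multi-indices whose eigenvalue exceeds `e^{-sM} > ε²` once
`s M < 2 ln ε⁻¹`. Letting `m → ∞` forces `s ≤ t (1 + ln ε⁻¹)`, and then `s ≈ 2 ln ε⁻¹ / M` with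
`ε → 0` forces `t ≥ 2 / M`.
-/

open Filter Real Set

/-- Information complexity: the number of multi-indices `(j₁,…,j_d) ∈ ℕ^d`
(here 0-indexed, so `Λ k j` stands for `λ(k+1, j+1)`) whose eigenvalue product exceeds `ε²`. -/
noncomputable def infoCount (Λ : ℕ → ℕ → ℝ) (d : ℕ) (ε : ℝ) : ℕ :=
  Nat.card {j : Fin d → ℕ | ε ^ 2 < ∏ k : Fin d, Λ k.val (j k)}

/-- Strong polynomial tractability. -/
def IsSPT (Λ : ℕ → ℕ → ℝ) : Prop :=
  ∃ C p : ℝ, 0 ≤ C ∧ 0 ≤ p ∧ ∀ d : ℕ, 1 ≤ d → ∀ ε : ℝ, ε ∈ Set.Ioo (0 : ℝ) 1 →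
    (infoCount Λ d ε : ℝ) ≤ C * ε ^ (-p)

/-- The exponent `p*` of strong polynomial tractability. -/
noncomputable def sptExponent (Λ : ℕ → ℕ → ℝ) : ℝ :=
  sInf {p : ℝ | 0 ≤ p ∧ ∃ C : ℝ, 0 ≤ C ∧ ∀ d : ℕ, 1 ≤ d → ∀ ε : ℝ, ε ∈ Set.Ioo (0 : ℝ) 1 →
    (infoCount Λ d ε : ℝ) ≤ C * ε ^ (-p)}

/-- Polynomial tractability. -/
def IsPT (Λ : ℕ → ℕ → ℝ) : Prop :=
  ∃ C p q : ℝ, 0 ≤ C ∧ 0 ≤ p ∧ 0 ≤ q ∧ ∀ d : ℕ, 1 ≤ d → ∀ ε : ℝ, ε ∈ Set.Ioo (0 : ℝ) 1 →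
    (infoCount Λ d ε : ℝ) ≤ C * (d : ℝ) ^ q * ε ^ (-p)

/-- Quasi-polynomial tractability. -/
def IsQPT (Λ : ℕ → ℕ → ℝ) : Prop :=
  ∃ C t : ℝ, 0 < C ∧ 0 < t ∧ ∀ d : ℕ, 1 ≤ d → ∀ ε : ℝ, ε ∈ Set.Ioo (0 : ℝ) 1 →
    (infoCount Λ d ε : ℝ) ≤ C * Real.exp (t * (1 + Real.log d) * (1 + Real.log ε⁻¹))

/-- The exponent `t*` of quasi-polynomial tractability. -/
noncomputable def qptExponent (Λ : ℕ → ℕ → ℝ) : ℝ :=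
  sInf {t : ℝ | 0 < t ∧ ∃ C : ℝ, 0 < C ∧ ∀ d : ℕ, 1 ≤ d → ∀ ε : ℝ, ε ∈ Set.Ioo (0 : ℝ) 1 →
    (infoCount Λ d ε : ℝ) ≤ C * Real.exp (t * (1 + Real.log d) * (1 + Real.log ε⁻¹))}

/-- The filter describing `ε⁻¹ + d → ∞` over pairs `(ε, d)` with `ε ∈ (0,1)` and `d ≥ 1`. -/
noncomputable def wtFilter : Filter (ℝ × ℕ) :=
  (Filter.comap (fun p : ℝ × ℕ => p.1⁻¹ + (p.2 : ℝ)) Filter.atTop) ⊓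
    Filter.principal {p : ℝ × ℕ | p.1 ∈ Set.Ioo (0 : ℝ) 1 ∧ 1 ≤ p.2}

/-- `(s,t)`-weak tractability: `ln n(ε,d) / (ε^{-s} + d^t) → 0` as `ε⁻¹ + d → ∞`. -/
def IsWT (Λ : ℕ → ℕ → ℝ) (s t : ℝ) : Prop :=
  Filter.Tendsto
    (fun p : ℝ × ℕ => Real.log (infoCount Λ p.2 p.1) / (p.1 ^ (-s) + (p.2 : ℝ) ^ t))
    wtFilter (nhds 0)

/-- Uniform weak tractability. -/
def IsUWT (Λ : ℕ → ℕ → ℝ) : Prop := ∀ s t : ℝ, 0 < s → 0 < t → IsWT Λ s t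

/-- The problem suffers from the curse of dimensionality. -/
def SuffersCurse (Λ : ℕ → ℕ → ℝ) : Prop :=
  ∃ C ε₀ α : ℝ, 0 < C ∧ 0 < ε₀ ∧ 0 < α ∧ ∀ ε : ℝ, 0 < ε → ε ≤ ε₀ →
    {d : ℕ | C * (1 + α) ^ d ≤ (infoCount Λ d ε : ℝ)}.Infinite

/-- Condition (3) of Property (P) for a given `τ > 0`:
`H(k,τ) = ∑_{j≥2} (λ(k,j)/λ(k,2))^τ` is finite for each `k` and
`sup_k H(k,τ) = H(1,τ)` (equivalently `H(k,τ) ≤ H(1,τ)` for all `k`). -/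
def Cond3 (Λ : ℕ → ℕ → ℝ) (τ : ℝ) : Prop :=
  0 < τ ∧ (∀ k, Summable fun j : ℕ => (Λ k (j + 1) / Λ k 1) ^ τ) ∧
    ∀ k, (∑' j : ℕ, (Λ k (j + 1) / Λ k 1) ^ τ) ≤ ∑' j : ℕ, (Λ 0 (j + 1) / Λ 0 1) ^ τ

/-- `τ₀`: the infimum of all `τ` satisfying Condition (3). -/
noncomputable def tau0 (Λ : ℕ → ℕ → ℝ) : ℝ := sInf {τ : ℝ | Cond3 Λ τ}

/-- Property (P): each sequence `λ(k,·)` is nonincreasing and nonnegative with `λ(k,1) = 1`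
and `λ(k,2) > 0`, `h_k = λ(k,2)` is nonincreasing, and Condition (3) holds for some `τ > 0`. -/
structure PropertyP (Λ : ℕ → ℕ → ℝ) : Prop where
  nonneg : ∀ k j, 0 ≤ Λ k j
  anti : ∀ k, Antitone (Λ k)
  first : ∀ k, Λ k 0 = 1
  second_pos : ∀ k, 0 < Λ k 1
  h_anti : Antitone fun k => Λ k 1
  cond3 : ∃ τ : ℝ, Cond3 Λ τ


/-- `ω_γ = 2γ²/(1+2γ²+√(1+4γ²))`, as a function of `c = γ²`. -/
noncomputable def omegaOf (c : ℝ) : ℝ := 2 * c / (1 + 2 * c + Real.sqrt (1 + 4 * c))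

/-- Normalized eigenvalues of the Gaussian-kernel problem:
`λ(k,j)/λ(k,1) = ω_{γ_k}^{j-1}` (0-indexed: `gaussLam γsq k j = ω_{γ_{k+1}}^j`,
where `γsq k = γ_{k+1}²`). -/
noncomputable def gaussLam (γsq : ℕ → ℝ) (k j : ℕ) : ℝ := omegaOf (γsq k) ^ j


section Counting

open Finset

variable {d : ℕ} {x : Fin d → ℝ} {δ : ℝ}

lemma exists_setOf_le_prod_pow_subset_piFinset (hx0 : ∀ k, 0 ≤ x k) (hx1 : ∀ k, x k < 1)
    (hδ : 0 < δ) :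
    ∃ N : Fin d → ℕ, {j : Fin d → ℕ | δ ≤ ∏ k, x k ^ j k} ⊆
      Fintype.piFinset fun k => range (N k) := by
  choose N hN using fun k => exists_pow_lt_of_lt_one hδ (hx1 k)
  refine ⟨N, fun j hj => ?_⟩
  rw [mem_coe, Fintype.mem_piFinset]
  intro k
  rw [Finset.mem_range]
  by_contra! hk
  have hfactor : ∏ i, x i ^ j i ≤ x k ^ j k := by
    simpa using prod_le_prod_of_subset_of_le_one (f := fun i => x i ^ j i)
      (subset_univ {k}) (fun i _ => pow_nonneg (hx0 i) _)
      (fun i _ _ => pow_le_one₀ (hx0 i) (hx1 i).le)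
  have hpow : x k ^ j k ≤ x k ^ N k := pow_le_pow_of_le_one (hx0 k) (hx1 k).le hk
  exact (hN k).not_ge (hj.trans (hfactor.trans hpow))

lemma finite_setOf_le_prod_pow (hx0 : ∀ k, 0 ≤ x k) (hx1 : ∀ k, x k < 1) (hδ : 0 < δ) :
    {j : Fin d → ℕ | δ ≤ ∏ k, x k ^ j k}.Finite := by
  obtain ⟨N, hN⟩ := exists_setOf_le_prod_pow_subset_piFinset hx0 hx1 hδ
  exact (finite_toSet _).subset hN

/-- Markov's inequality for the counting measure weighted by `∏ x_k ^ j_k`, whose total mass is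
`∏ (1 - x_k)⁻¹`. -/
lemma natCard_mul_le_prod_inv_one_sub (hx0 : ∀ k, 0 ≤ x k) (hx1 : ∀ k, x k < 1) (hδ : 0 < δ)
    {S : Set (Fin d → ℕ)} (hS : ∀ j ∈ S, δ ≤ ∏ k, x k ^ j k) :
    Nat.card S * δ ≤ ∏ k, (1 - x k)⁻¹ := by
  obtain ⟨N, hN⟩ := exists_setOf_le_prod_pow_subset_piFinset hx0 hx1 hδ
  have hSN : S ⊆ Fintype.piFinset fun k => range (N k) := fun j hj => hN (hS j hj)
  have hfin : S.Finite := (finite_toSet _).subset hSN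
  rw [Nat.card_eq_card_finite_toFinset hfin]
  calc (#hfin.toFinset : ℝ) * δ ≤ ∑ j ∈ hfin.toFinset, ∏ k, x k ^ j k := by
        rw [← nsmul_eq_mul]
        exact card_nsmul_le_sum _ _ _ fun j hj => hS j (hfin.mem_toFinset.mp hj)
    _ ≤ ∑ j ∈ Fintype.piFinset fun k => range (N k), ∏ k, x k ^ j k :=
        sum_le_sum_of_subset_of_nonneg (hfin.toFinset_subset.mpr hSN)
          fun j _ _ => prod_nonneg fun k _ => pow_nonneg (hx0 k) _
    _ = ∏ k, ∑ i ∈ range (N k), x k ^ i := (prod_univ_sum _ _).symm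
    _ ≤ ∏ k, (1 - x k)⁻¹ := by
        refine prod_le_prod (fun k _ => sum_nonneg fun i _ => pow_nonneg (hx0 k) i)
          fun k _ => ?_
        rw [← tsum_geometric_of_lt_one (hx0 k) (hx1 k)]
        exact Summable.sum_le_tsum _ (fun i _ => pow_nonneg (hx0 k) i)
          (summable_geometric_of_lt_one (hx0 k) (hx1 k))

end Counting

lemma prod_inv_one_sub_le_exp {ι : Type*} (s : Finset ι) {x : ι → ℝ} {q : ℝ}
    (hx0 : ∀ i ∈ s, 0 ≤ x i) (hxq : ∀ i ∈ s, x i ≤ q) (hq : q < 1) :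
    ∏ i ∈ s, (1 - x i)⁻¹ ≤ Real.exp ((∑ i ∈ s, x i) / (1 - q)) := by
  rw [Finset.sum_div, Real.exp_sum]
  refine Finset.prod_le_prod (fun i hi => (inv_pos.mpr (by linarith [hxq i hi])).le)
    fun i hi => ?_
  have hxi : 0 < 1 - x i := by linarith [hxq i hi]
  calc (1 - x i)⁻¹ = x i / (1 - x i) + 1 := by field_simp; ring
    _ ≤ x i / (1 - q) + 1 := by gcongr; exacts [hx0 i hi, hxq i hi]
    _ ≤ Real.exp (x i / (1 - q)) := Real.add_one_le_exp _

noncomputable def geomLam (L : ℕ → ℝ) (k j : ℕ) : ℝ := Real.exp (-L k) ^ j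

def QPTBound (Λ : ℕ → ℕ → ℝ) (t C : ℝ) : Prop :=
  ∀ d : ℕ, 1 ≤ d → ∀ ε ∈ Set.Ioo (0 : ℝ) 1,
    (infoCount Λ d ε : ℝ) ≤ C * Real.exp (t * (1 + Real.log d) * (1 + Real.log ε⁻¹))

lemma prod_exp_neg_pow {d : ℕ} (a : Fin d → ℝ) (j : Fin d → ℕ) :
    ∏ k, Real.exp (-a k) ^ j k = Real.exp (-∑ k, j k * a k) := by
  simp only [← Real.exp_nat_mul, ← Real.exp_sum, ← Finset.sum_neg_distrib, mul_neg]

section GeomLam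

open Finset

variable {L : ℕ → ℝ} {ε : ℝ}

lemma sq_lt_prod_geomLam_iff (hε : 0 < ε) {d : ℕ} (j : Fin d → ℕ) :
    ε ^ 2 < ∏ k : Fin d, geomLam L k (j k) ↔ ∑ k, j k * L k < 2 * Real.log ε⁻¹ := by
  unfold geomLam
  rw [prod_exp_neg_pow (fun k : Fin d => L k), ← Real.exp_log (pow_pos hε 2), Real.exp_lt_exp,
    Real.log_pow, Real.log_inv]
  push_cast
  constructor <;> intro h <;> linarith

lemma infoCount_geomLam_le (hL : ∀ k, 0 < L k) (hε : 0 < ε) {τ : ℝ} (hτ : 0 < τ) (d : ℕ) :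
    (infoCount (geomLam L) d ε : ℝ) ≤
      Real.exp (2 * τ * Real.log ε⁻¹) * ∏ k : Fin d, (1 - Real.exp (-(τ * L k)))⁻¹ := by
  set A := 2 * τ * Real.log ε⁻¹
  have hmarkov := natCard_mul_le_prod_inv_one_sub
    (S := {j : Fin d → ℕ | ε ^ 2 < ∏ k : Fin d, geomLam L k (j k)})
    (x := fun k : Fin d => Real.exp (-(τ * L k))) (fun k => (Real.exp_pos _).le)
    (fun k => Real.exp_lt_one_iff.mpr (by nlinarith [hL k])) (Real.exp_pos (-A)) fun j hj => by
      have hsum := (sq_lt_prod_geomLam_iff hε j).mp hj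
      rw [prod_exp_neg_pow, Real.exp_le_exp, neg_le_neg_iff]
      simp only [mul_left_comm _ τ, ← mul_sum]
      nlinarith
  rw [Real.exp_neg, ← div_eq_mul_inv, div_le_iff₀ (Real.exp_pos A)] at hmarkov
  rw [infoCount, mul_comm]
  exact hmarkov

lemma sum_exp_neg_mul_le (hL : Monotone L) (hL0 : 0 ≤ L 0) {τ : ℝ} (hτ : 0 ≤ τ) (d K : ℕ) :
    ∑ k : Fin d, Real.exp (-(τ * L k)) ≤ K + d * Real.exp (-(τ * L K)) := by
  rw [Fin.sum_univ_eq_sum_range (fun k => Real.exp (-(τ * L k)))]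
  have hterm : ∀ k, Real.exp (-(τ * L k)) ≤ (if k < K then 1 else 0) + Real.exp (-(τ * L K)) := by
    intro k
    split_ifs with hk
    · have : Real.exp (-(τ * L k)) ≤ 1 :=
        Real.exp_le_one_iff.mpr (by nlinarith [hL (Nat.zero_le k)])
      linarith [Real.exp_pos (-(τ * L K))]
    · rw [zero_add, Real.exp_le_exp, neg_le_neg_iff]
      exact mul_le_mul_of_nonneg_left (hL (not_lt.mp hk)) hτ
  have hcard : #{k ∈ range d | k < K} ≤ K :=
    (Finset.card_le_card fun k hk => by
      simp only [mem_filter, Finset.mem_range] at hk ⊢; omega).trans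
      (card_range K).le
  calc ∑ k ∈ range d, Real.exp (-(τ * L k))
      ≤ ∑ k ∈ range d, ((if k < K then 1 else 0) + Real.exp (-(τ * L K))) :=
        sum_le_sum fun k _ => hterm k
    _ = #{k ∈ range d | k < K} + d * Real.exp (-(τ * L K)) := by
        rw [sum_add_distrib, sum_boole, sum_const, card_range, nsmul_eq_mul]
    _ ≤ K + d * Real.exp (-(τ * L K)) := by gcongr

lemma qptBound_geomLam (hL : Monotone L) (hL0 : 0 < L 0) {t : ℝ} (ht : 0 < t) {K : ℕ}
    (hK : 2 ≤ t * L K) :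
    QPTBound (geomLam L) t (Real.exp ((K + 1) / (1 - Real.exp (-(t / 2 * L 0))))) := by
  rintro d hd ε ⟨hε0, hε1⟩
  have hE : 0 < Real.log ε⁻¹ := Real.log_pos ((one_lt_inv₀ hε0).mpr hε1)
  have hlogd : 0 ≤ Real.log d := Real.log_nonneg (by exact_mod_cast hd)
  set τ := t / 2 * (1 + Real.log d)
  have hτ : t / 2 ≤ τ := le_mul_of_one_le_right (by positivity) (by linarith)
  set q := Real.exp (-(t / 2 * L 0))
  have hq : q < 1 := Real.exp_lt_one_iff.mpr (by nlinarith)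
  have hxq : ∀ k : Fin d, Real.exp (-(τ * L k)) ≤ q := fun k =>
    Real.exp_le_exp.mpr (neg_le_neg (mul_le_mul hτ (hL (Nat.zero_le k)) hL0.le (by positivity)))
  have htail : (d : ℝ) * Real.exp (-(τ * L K)) ≤ 1 := by
    have hdpos : (0 : ℝ) < d := by exact_mod_cast hd
    calc (d : ℝ) * Real.exp (-(τ * L K)) ≤ d * Real.exp (-Real.log d) := by
          have : τ * L K = t * L K / 2 * (1 + Real.log d) := by ring
          gcongr
          nlinarith
      _ = 1 := by rw [Real.exp_neg, Real.exp_log hdpos, mul_inv_cancel₀ hdpos.ne']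
  have hsum : ∑ k : Fin d, Real.exp (-(τ * L k)) ≤ K + 1 :=
    (sum_exp_neg_mul_le hL hL0.le (by positivity) d K).trans (by linarith)
  calc (infoCount (geomLam L) d ε : ℝ)
      ≤ Real.exp (2 * τ * Real.log ε⁻¹) * ∏ k : Fin d, (1 - Real.exp (-(τ * L k)))⁻¹ :=
        infoCount_geomLam_le (fun k => hL0.trans_le (hL (Nat.zero_le k))) hε0 (by positivity) d
    _ ≤ Real.exp (2 * τ * Real.log ε⁻¹) * Real.exp ((K + 1) / (1 - q)) := by
        gcongr
        refine (prod_inv_one_sub_le_exp _ (fun k _ => (Real.exp_pos _).le) (fun k _ => hxq k)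
          hq).trans (Real.exp_le_exp.mpr ?_)
        gcongr
    _ ≤ Real.exp ((K + 1) / (1 - q)) *
          Real.exp (t * (1 + Real.log d) * (1 + Real.log ε⁻¹)) := by
        have : 2 * τ * Real.log ε⁻¹ = t * (1 + Real.log d) * Real.log ε⁻¹ := by ring
        rw [mul_comm, this]
        gcongr
        linarith

end GeomLam

lemma le_of_forall_pos_mul_le_mul_add {a b c : ℝ} (h : ∀ E > 0, a * E ≤ b * E + c) : a ≤ b := by
  by_contra! hba
  have hab : 0 < a - b := sub_pos.mpr hba
  have hE := h ((|c| + 1) / (a - b)) (by positivity)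
  have hcancel : (a - b) * ((|c| + 1) / (a - b)) = |c| + 1 := mul_div_cancel₀ _ hab.ne'
  nlinarith [le_abs_self c]

lemma le_of_forall_natCast_rpow_le {a b C : ℝ}
    (h : ∀ m : ℕ, 1 ≤ m → (m : ℝ) ^ b ≤ C * (m : ℝ) ^ a) : b ≤ a := by
  by_contra! hab
  have hlim : Tendsto (fun m : ℕ => (m : ℝ) ^ (b - a)) atTop atTop :=
    (tendsto_rpow_atTop (sub_pos.mpr hab)).comp tendsto_natCast_atTop_atTop
  obtain ⟨m, hmC, hm1⟩ := ((hlim.eventually_gt_atTop C).and (eventually_ge_atTop 1)).exists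
  have hmpos : (0 : ℝ) < m := by exact_mod_cast hm1
  rw [Real.rpow_sub hmpos, lt_div_iff₀ (Real.rpow_pos_of_pos hmpos a)] at hmC
  linarith [h m hm1]

section BlockIndicator

variable {s m : ℕ}

def blockIndicator (f : Fin s → Fin m) (k : Fin (s * m)) : ℕ :=
  if (finProdFinEquiv.symm k).2 = f (finProdFinEquiv.symm k).1 then 1 else 0

lemma blockIndicator_injective : Function.Injective (blockIndicator (s := s) (m := m)) := by
  intro f g h
  funext i
  simpa [blockIndicator] using congrFun h (finProdFinEquiv (i, f i))

lemma sum_blockIndicator (f : Fin s → Fin m) : ∑ k, blockIndicator f k = s := by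
  rw [← finProdFinEquiv.sum_comp, Fintype.sum_prod_type]
  simp [blockIndicator]

end BlockIndicator

section LowerBound

variable {L : ℕ → ℝ} {M ε : ℝ}

lemma pow_le_infoCount_geomLam (hL : ∀ k, 0 < L k) (hM : ∀ k, L k ≤ M) (hε : 0 < ε) {s : ℕ}
    (m : ℕ) (hsM : s * M < 2 * Real.log ε⁻¹) :
    (m : ℝ) ^ s ≤ infoCount (geomLam L) (s * m) ε := by
  set S := {j : Fin (s * m) → ℕ | ε ^ 2 < ∏ k : Fin (s * m), geomLam L k (j k)}
  have hfin : S.Finite :=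
    (finite_setOf_le_prod_pow (x := fun k : Fin (s * m) => Real.exp (-L k))
      (fun _ => (Real.exp_pos _).le) (fun k => Real.exp_lt_one_iff.mpr (neg_lt_zero.mpr (hL k)))
      (pow_pos hε 2)).subset fun _ (hj : ε ^ 2 < _) => hj.le
  have hmem : ∀ f, blockIndicator f ∈ S := fun f => by
    refine (sq_lt_prod_geomLam_iff hε _).mpr (lt_of_le_of_lt ?_ hsM)
    calc ∑ k, (blockIndicator f k : ℝ) * L k ≤ ∑ k, (blockIndicator f k : ℝ) * M :=
          Finset.sum_le_sum fun k _ => mul_le_mul_of_nonneg_left (hM k) (Nat.cast_nonneg _)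
      _ = s * M := by rw [← Finset.sum_mul, ← Nat.cast_sum, sum_blockIndicator]
  have := hfin.to_subtype
  calc (m : ℝ) ^ s = Nat.card (Fin s → Fin m) := by simp
    _ ≤ Nat.card S := by
        exact_mod_cast Nat.card_le_card_of_injective (fun f => (⟨blockIndicator f, hmem f⟩ : S))
          fun f g h => blockIndicator_injective (congrArg Subtype.val h)

lemma natCast_le_of_qptBound (hL : ∀ k, 0 < L k) (hM : ∀ k, L k ≤ M) {t C : ℝ}
    (h : QPTBound (geomLam L) t C) (hε : ε ∈ Set.Ioo 0 1) {s : ℕ} (hs : 1 ≤ s)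
    (hsM : s * M < 2 * Real.log ε⁻¹) : (s : ℝ) ≤ t * (1 + Real.log ε⁻¹) := by
  set E := Real.log ε⁻¹
  have hspos : (0 : ℝ) < s := by exact_mod_cast hs
  refine le_of_forall_natCast_rpow_le (C := C * Real.exp (t * (1 + Real.log s) * (1 + E)))
    fun m hm => ?_
  have hmpos : (0 : ℝ) < m := by exact_mod_cast hm
  calc (m : ℝ) ^ (s : ℝ) = (m : ℝ) ^ s := Real.rpow_natCast _ _
    _ ≤ infoCount (geomLam L) (s * m) ε := pow_le_infoCount_geomLam hL hM hε.1 m hsM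
    _ ≤ C * Real.exp (t * (1 + Real.log (s * m : ℕ)) * (1 + E)) :=
        h (s * m) (Nat.mul_le_mul hs hm) ε hε
    _ = C * Real.exp (t * (1 + Real.log s) * (1 + E)) * (m : ℝ) ^ (t * (1 + E)) := by
        rw [Nat.cast_mul, Real.log_mul hspos.ne' hmpos.ne', Real.rpow_def_of_pos hmpos, mul_assoc C,
          ← Real.exp_add]
        ring_nf

lemma two_div_le_of_qptBound (hL : ∀ k, 0 < L k) (hM : ∀ k, L k ≤ M) {t C : ℝ} (ht : 0 ≤ t)
    (h : QPTBound (geomLam L) t C) : 2 / M ≤ t := by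
  have hM0 : 0 < M := (hL 0).trans_le (hM 0)
  refine le_of_forall_pos_mul_le_mul_add (c := t + 1) fun E hE => ?_
  have hε : Real.exp (-E) ∈ Set.Ioo 0 1 := ⟨Real.exp_pos _, Real.exp_lt_one_iff.mpr (by linarith)⟩
  have hlog : Real.log (Real.exp (-E))⁻¹ = E := by rw [Real.exp_neg, inv_inv, Real.log_exp]
  by_contra! hlt
  set y := t * (1 + E)
  have hy : 0 ≤ y := by positivity
  have hsM : ((⌊y⌋₊ + 1 : ℕ) : ℝ) * M < 2 * Real.log (Real.exp (-E))⁻¹ := by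
    rw [hlog]
    push_cast
    calc (⌊y⌋₊ + 1 : ℝ) * M ≤ (y + 1) * M := by gcongr; exact Nat.floor_le hy
      _ < 2 / M * E * M := by gcongr; linarith
      _ = 2 * E := by field_simp
  have hs := natCast_le_of_qptBound hL hM h hε (Nat.le_add_left 1 _) hsM
  rw [hlog] at hs
  push_cast at hs
  linarith [Nat.lt_floor_add_one y]

end LowerBound

lemma sInf_eq_of_Ioi_subset_of_subset_Ici {T : Set ℝ} {a : ℝ} (h₁ : Set.Ioi a ⊆ T)
    (h₂ : T ⊆ Set.Ici a) : sInf T = a :=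
  le_antisymm (csInf_Ioi (a := a) ▸ csInf_le_csInf ⟨a, h₂⟩ Set.nonempty_Ioi h₁)
    (le_csInf (Set.nonempty_Ioi.mono h₁) h₂)

section ERealSupremum

variable {L : ℕ → ℝ} {t : ℝ}

lemma iSup_coe_ne_bot : (⨆ k, (L k : EReal)) ≠ ⊥ :=
  ne_bot_of_le_ne_bot (EReal.coe_ne_bot (L 0)) (le_iSup (fun k => (L k : EReal)) 0)

/-- When the supremum is `⊤`, its `toReal` is `0` and the left-hand side is `2 / 0 = 0`. -/
lemma exists_two_lt_mul_of_two_div_toReal_iSup_lt (hL0 : 0 < L 0)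
    (ht : 2 / (⨆ k, (L k : EReal)).toReal < t) : 0 < t ∧ ∃ K, 2 < t * L K := by
  set S := ⨆ k, (L k : EReal)
  have hlt : 0 < t ∧ ((2 / t : ℝ) : EReal) < S := by
    by_cases hS : S = ⊤
    · rw [hS, EReal.toReal_top, div_zero] at ht
      exact ⟨ht, hS ▸ EReal.coe_lt_top _⟩
    · rw [← EReal.coe_toReal hS iSup_coe_ne_bot]
      have hM : L 0 ≤ S.toReal := by
        rw [← EReal.coe_le_coe_iff, EReal.coe_toReal hS iSup_coe_ne_bot]
        exact le_iSup (fun k => (L k : EReal)) 0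
      have htpos : 0 < t := lt_trans (div_pos two_pos (hL0.trans_le hM)) ht
      refine ⟨htpos, EReal.coe_lt_coe_iff.mpr ?_⟩
      rwa [div_lt_comm₀ htpos (by linarith)]
  obtain ⟨K, hK⟩ := lt_iSup_iff.mp hlt.2
  refine ⟨hlt.1, K, ?_⟩
  rwa [EReal.coe_lt_coe_iff, div_lt_iff₀ hlt.1, mul_comm] at hK

lemma two_div_toReal_iSup_le (ht : 0 ≤ t) (hlow : ∀ M, (∀ k, L k ≤ M) → 2 / M ≤ t) :
    2 / (⨆ k, (L k : EReal)).toReal ≤ t := by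
  set S := ⨆ k, (L k : EReal)
  by_cases hS : S = ⊤
  · rwa [hS, EReal.toReal_top, div_zero]
  · refine hlow _ fun k => ?_
    rw [← EReal.coe_le_coe_iff, EReal.coe_toReal hS iSup_coe_ne_bot]
    exact le_iSup (fun k => (L k : EReal)) k

end ERealSupremum

theorem isQPT_geomLam_and_qptExponent_eq {L : ℕ → ℝ} (hL : Monotone L) (hL0 : 0 < L 0) :
    IsQPT (geomLam L) ∧ qptExponent (geomLam L) = 2 / (⨆ k, (L k : EReal)).toReal := by
  set a := 2 / (⨆ k, (L k : EReal)).toReal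
  set T := {t : ℝ | 0 < t ∧ ∃ C, 0 < C ∧ QPTBound (geomLam L) t C}
  have hup : Set.Ioi a ⊆ T := fun t ht => by
    obtain ⟨htpos, K, hK⟩ := exists_two_lt_mul_of_two_div_toReal_iSup_lt hL0 ht
    exact ⟨htpos, _, Real.exp_pos _, qptBound_geomLam hL hL0 htpos hK.le⟩
  have hlow : T ⊆ Set.Ici a := fun t ⟨htpos, _, _, hbound⟩ =>
    two_div_toReal_iSup_le htpos.le fun _ hM =>
      two_div_le_of_qptBound (fun k => hL0.trans_le (hL (Nat.zero_le k))) hM htpos.le hbound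
  obtain ⟨ht, C, hC, hbound⟩ := hup (lt_add_one a)
  exact ⟨⟨C, a + 1, hC, ht, hbound⟩, sInf_eq_of_Ioi_subset_of_subset_Ici hup hlow⟩

section Gaussian

variable {c : ℝ}

/-- With `s = √(1 + 4c)` one has `2c = (s² - 1) / 2` and `1 + 2c + s = (s + 1)² / 2`,
so `ω = (s - 1) / (s + 1)`. -/
lemma omegaOf_eq_one_sub (hc : 0 ≤ c) : omegaOf c = 1 - 2 / (Real.sqrt (1 + 4 * c) + 1) := by
  have hs := Real.sq_sqrt (by linarith : (0 : ℝ) ≤ 1 + 4 * c)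
  have hs0 := Real.sqrt_nonneg (1 + 4 * c)
  rw [omegaOf, eq_sub_iff_add_eq, div_add_div _ _ (by positivity) (by positivity),
    div_eq_one_iff_eq (by positivity)]
  linear_combination (-1 : ℝ) * hs

lemma omegaOf_pos (hc : 0 < c) : 0 < omegaOf c := div_pos (by linarith) (by positivity)

lemma omegaOf_lt_one (hc : 0 ≤ c) : omegaOf c < 1 := by
  rw [omegaOf_eq_one_sub hc]
  have : 0 < 2 / (Real.sqrt (1 + 4 * c) + 1) := by positivity
  linarith

lemma omegaOf_monotoneOn : MonotoneOn omegaOf (Set.Ici 0) := fun c hc c' hc' h => by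
  rw [omegaOf_eq_one_sub hc, omegaOf_eq_one_sub hc']
  gcongr

end Gaussian

lemma gaussLam_eq_geomLam {γsq : ℕ → ℝ} (hpos : ∀ k, 0 < γsq k) :
    gaussLam γsq = geomLam fun k => Real.log (omegaOf (γsq k))⁻¹ := by
  funext k j
  rw [gaussLam, geomLam, Real.log_inv, neg_neg, Real.exp_log (omegaOf_pos (hpos k))]

/-- Gaussian kernels, normalized error criterion: QPT holds for all shape parameters, with
exponent of QPT equal to `2 / lim ln((1+2γ_k²+√(1+4γ_k²))/(2γ_k²))` (the limit exists in
`(0,∞]` by monotonicity and equals the limsup used here; when it is `∞` the exponent is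
`0` via `EReal.toReal ⊤ = 0` and `2/0 = 0`). -/
theorem gauss_qpt (γsq : ℕ → ℝ) (hpos : ∀ k, 0 < γsq k) (hanti : Antitone γsq) :
    IsQPT (gaussLam γsq) ∧
      qptExponent (gaussLam γsq) =
        2 / (Filter.limsup
          (fun k : ℕ =>
            (Real.log ((1 + 2 * γsq k + Real.sqrt (1 + 4 * γsq k)) / (2 * γsq k)) : EReal))
          Filter.atTop).toReal := by
  set L : ℕ → ℝ := fun k => Real.log (omegaOf (γsq k))⁻¹ with hLdef
  have hω := fun k => omegaOf_pos (hpos k)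
  have hL : Monotone L := fun k k' h =>
    Real.log_le_log (inv_pos.mpr (hω k)) <| (inv_le_inv₀ (hω k) (hω k')).mpr <|
      omegaOf_monotoneOn (hpos k').le (hpos k).le (hanti h)
  have hL0 : 0 < L 0 := Real.log_pos ((one_lt_inv₀ (hω 0)).mpr (omegaOf_lt_one (hpos 0).le))
  have hrate : (fun k : ℕ =>
      (Real.log ((1 + 2 * γsq k + Real.sqrt (1 + 4 * γsq k)) / (2 * γsq k)) : EReal)) =
      fun k => (L k : EReal) := by
    simp only [hLdef, omegaOf, inv_div]
  rw [hrate, (tendsto_atTop_iSup fun _ _ h => EReal.coe_le_coe_iff.mpr (hL h)).limsup_eq,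
    gaussLam_eq_geomLam hpos]
  exact isQPT_geomLam_and_qptExponent_eq hL hL0
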